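/- In a finite tree, the minimum size of a vertex cover equals the maximum size of a matching (König's theorem for trees), and both equal |B| + |R| where (B, R, G) is the b-coloring of the tree. -/

import Mathlib

variable {V : Type*} [Fintype V] [DecidableEq V]

/-- `C` is a vertex cover of `A`. -/
def IsVC (A : SimpleGraph V) (C : Set V) : Prop :=
  ∀ e ∈ A.edgeSet, ∃ v ∈ C, v ∈ e

/-- `C` is a minimum vertex cover of `A`. -/
def IsMinVC (A : SimpleGraph V) (C : Set V) : Prop :=
  IsVC A C ∧ ∀ D : Set V, IsVC A D → C.ncard ≤ D.ncard

/-- `M` is a matching of `A`: a set of edges, pairwise non-adjacent. -/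
def IsMatch (A : SimpleGraph V) (M : Set (Sym2 V)) : Prop :=
  M ⊆ A.edgeSet ∧ ∀ e ∈ M, ∀ f ∈ M, e ≠ f → ∀ v : V, ¬(v ∈ e ∧ v ∈ f)

/-- `M` is a maximum matching of `A`. -/
def IsMaxMatch (A : SimpleGraph V) (M : Set (Sym2 V)) : Prop :=
  IsMatch A M ∧ ∀ N : Set (Sym2 V), IsMatch A N → N.ncard ≤ M.ncard

/-- endpoints of a set of edges -/
def Rsupp (R : Set (Sym2 V)) : Set V := {v | ∃ e ∈ R, v ∈ e}

/-- the tricoloring conditions (iii) of the paper -/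
def IsBColoring (A : SimpleGraph V) (B : Set V) (R : Set (Sym2 V)) (G : Set V) : Prop :=
  R ⊆ A.edgeSet ∧
  B ∪ G ∪ Rsupp R = Set.univ ∧
  Disjoint B G ∧ Disjoint B (Rsupp R) ∧ Disjoint G (Rsupp R) ∧
  (∀ e ∈ R, ∀ f ∈ R, e ≠ f → ∀ v : V, ¬(v ∈ e ∧ v ∈ f)) ∧
  (∀ v w : V, A.Adj v w → v ∈ G → w ∈ B) ∧
  (∀ b ∈ B, 2 ≤ (A.neighborSet b ∩ G).ncard)

/-- positive vertex-cover backbone -/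
def PosBB (A : SimpleGraph V) : Set V := {v | ∀ C : Set V, IsMinVC A C → v ∈ C}

/-- negative vertex-cover backbone -/
def NegBB (A : SimpleGraph V) : Set V := {v | ∀ C : Set V, IsMinVC A C → v ∉ C}

/-- degenerate vertex -/
def Degen (A : SimpleGraph V) (v : V) : Prop :=
  (∃ C : Set V, IsMinVC A C ∧ v ∈ C) ∧ (∃ C : Set V, IsMinVC A C ∧ v ∉ C)

/-- exclusive edge -/
def Exclusive (A : SimpleGraph V) (e : Sym2 V) : Prop :=
  e ∈ A.edgeSet ∧ (∀ v ∈ e, Degen A v) ∧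
  ∀ C : Set V, IsMinVC A C → ∃ v ∈ e, v ∉ C

/-!
Root the tree at a vertex `r`. Every vertex of `B` has at least two neighbours in `G`, at most one
of which is its parent, so it can be matched to a child in `G`; different vertices of `B` have
different children, and `G` and `B` avoid the endpoints of `R`. Together with `R` this gives a
matching of size `|B| + |R|`. Conversely `B` together with the endpoint nearer to `r` of every
edge of `R` is a vertex cover of size at most `|B| + |R|`: an edge not meeting `B` has no endpoint
in `G`, so it joins two endpoints of `R`, and unless it lies in `R` its lower endpoint is the
upper endpoint of its own `R`-edge, because its parent is already taken by another edge of `R`.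
Since every matching is at most as large as every vertex cover, both extremal values equal
`|B| + |R|`.
-/

namespace SimpleGraph

variable {V : Type*} {A : SimpleGraph V}

lemma IsTree.eq_of_adj_of_dist_eq_add_one (hA : A.IsTree) (r : V) {u w v : V}
    (hu : A.Adj u v) (hw : A.Adj w v)
    (hud : A.dist r v = A.dist r u + 1) (hwd : A.dist r v = A.dist r w + 1) : u = w := by
  obtain ⟨p, -, hp⟩ := hA.connected.exists_path_of_dist r u
  obtain ⟨q, -, hq⟩ := hA.connected.exists_path_of_dist r w
  have hpq : p.concat hu = q.concat hw := congrArg Subtype.val <|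
    (hA.isAcyclic.subsingleton_path r v).elim
      ⟨_, (p.concat hu).isPath_of_length_eq_dist (by rw [Walk.length_concat, hp, hud])⟩
      ⟨_, (q.concat hw).isPath_of_length_eq_dist (by rw [Walk.length_concat, hq, hwd])⟩
  exact (Walk.concat_inj hpq).1

def parentEnds (A : SimpleGraph V) (r : V) (R : Set (Sym2 V)) : Set V :=
  {v | ∃ e ∈ R, v ∈ e ∧ ∀ w ∈ e, A.dist r v ≤ A.dist r w}

lemma IsTree.ncard_parentEnds_le [Finite V] (hA : A.IsTree) {r : V} {R : Set (Sym2 V)}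
    (hR : R ⊆ A.edgeSet) : (parentEnds A r R).ncard ≤ R.ncard := by
  choose f hfR hvf hfle using fun v : parentEnds A r R => v.2
  have hinj : Function.Injective fun v => (⟨f v, hfR v⟩ : R) := by
    intro v w hvw
    have hvw : f v = f w := congrArg Subtype.val hvw
    by_contra hne
    have hne' : (v : V) ≠ w := fun h => hne (Subtype.ext h)
    have he : f v = s((v : V), w) := (Sym2.mem_and_mem_iff hne').1 ⟨hvf v, hvw ▸ hvf w⟩
    have hadj : A.Adj v w := A.mem_edgeSet.1 (he ▸ hR (hfR v))
    exact hA.dist_ne_of_adj r hadj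
      (le_antisymm (hfle v w (hvw ▸ hvf w)) (hfle w v (hvw ▸ hvf v)))
  simpa only [Nat.card_coe_set_eq] using Nat.card_le_card_of_injective _ hinj

end SimpleGraph

open SimpleGraph

section Matching

variable {V : Type*} {A : SimpleGraph V}

lemma IsMatch.ncard_le_of_isVC [Finite V] {M : Set (Sym2 V)} {C : Set V}
    (hM : IsMatch A M) (hC : IsVC A C) : M.ncard ≤ C.ncard := by
  choose f hfC hfe using fun e : M => hC e (hM.1 e.2)
  have hinj : Function.Injective fun e => (⟨f e, hfC e⟩ : C) := by
    intro e e' hee'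
    have hff : f e = f e' := congrArg Subtype.val hee'
    by_contra hne
    exact hM.2 e e.2 e' e'.2 (fun h => hne (Subtype.ext h)) (f e) ⟨hfe e, hff ▸ hfe e'⟩
  simpa only [Nat.card_coe_set_eq] using Nat.card_le_card_of_injective _ hinj

lemma IsVC.sInf_ncard_eq [Finite V] {M : Set (Sym2 V)} {C : Set V} (hC : IsVC A C)
    (hM : IsMatch A M) (hCM : C.ncard ≤ M.ncard) :
    sInf {n : ℕ | ∃ D : Set V, IsVC A D ∧ D.ncard = n} = M.ncard :=
  IsLeast.csInf_eq ⟨⟨C, hC, le_antisymm hCM (hM.ncard_le_of_isVC hC)⟩, by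
    rintro _ ⟨D, hD, rfl⟩
    exact hM.ncard_le_of_isVC hD⟩

lemma IsMatch.sSup_ncard_eq [Finite V] {M : Set (Sym2 V)} {C : Set V} (hM : IsMatch A M)
    (hC : IsVC A C) (hCM : C.ncard ≤ M.ncard) :
    sSup {n : ℕ | ∃ N : Set (Sym2 V), IsMatch A N ∧ N.ncard = n} = M.ncard :=
  IsGreatest.csSup_eq ⟨⟨M, hM, rfl⟩, by
    rintro _ ⟨N, hN, rfl⟩
    exact (hN.ncard_le_of_isVC hC).trans hCM⟩

lemma IsMatch.union {M N : Set (Sym2 V)} (hM : IsMatch A M) (hN : IsMatch A N)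
    (h : Disjoint (Rsupp M) (Rsupp N)) : IsMatch A (M ∪ N) := by
  refine ⟨Set.union_subset hM.1 hN.1, ?_⟩
  rintro e (he | he) f (hf | hf) hef v ⟨hve, hvf⟩
  · exact hM.2 e he f hf hef v ⟨hve, hvf⟩
  · exact Set.disjoint_left.1 h ⟨e, he, hve⟩ ⟨f, hf, hvf⟩
  · exact Set.disjoint_left.1 h ⟨f, hf, hvf⟩ ⟨e, he, hve⟩
  · exact hN.2 e he f hf hef v ⟨hve, hvf⟩

lemma disjoint_of_disjoint_Rsupp {M N : Set (Sym2 V)} (h : Disjoint (Rsupp M) (Rsupp N)) :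
    Disjoint M N := by
  refine Set.disjoint_left.2 fun e heM heN => ?_
  induction e using Sym2.ind with
  | _ u v =>
    exact Set.disjoint_left.1 h ⟨_, heM, Sym2.mem_mk_left u v⟩ ⟨_, heN, Sym2.mem_mk_left u v⟩

lemma isMatch_image_mk {B : Set V} {c : V → V} (hadj : ∀ b ∈ B, A.Adj b (c b))
    (hc : Set.InjOn c B) (hBc : Disjoint B (c '' B)) :
    IsMatch A ((fun b => s(b, c b)) '' B) := by
  refine ⟨fun e ⟨b, hb, he⟩ => he ▸ A.mem_edgeSet.2 (hadj b hb), ?_⟩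
  rintro _ ⟨b, hb, rfl⟩ _ ⟨b', hb', rfl⟩ hne v ⟨hv, hv'⟩
  have hbb' : b ≠ b' := fun h => hne (h ▸ rfl)
  rcases Sym2.mem_iff.1 hv with rfl | rfl <;> rcases Sym2.mem_iff.1 hv' with h | h
  · exact hbb' h
  · exact Set.disjoint_left.1 hBc hb ⟨b', hb', h.symm⟩
  · exact Set.disjoint_left.1 hBc hb' ⟨b, hb, h⟩
  · exact hbb' (hc hb hb' h)

lemma Rsupp_image_mk_subset (B : Set V) (c : V → V) :
    Rsupp ((fun b => s(b, c b)) '' B) ⊆ B ∪ c '' B := by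
  rintro v ⟨_, ⟨b, hb, rfl⟩, hv⟩
  rcases Sym2.mem_iff.1 hv with rfl | rfl
  exacts [Or.inl hb, Or.inr ⟨b, hb, rfl⟩]

lemma IsMatch.mem_parentEnds_of_adj (hA : A.IsTree) (r : V) {R : Set (Sym2 V)}
    (hR : IsMatch A R) {u v : V} {e₁ e₂ : Sym2 V} (huv : A.Adj u v)
    (hd : A.dist r v = A.dist r u + 1) (he₁ : e₁ ∈ R) (he₂ : e₂ ∈ R) (hu : u ∈ e₁)
    (hv : v ∈ e₂) : u ∈ parentEnds A r R ∨ v ∈ parentEnds A r R := by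
  by_cases h : e₁ = e₂
  · subst h
    have he : e₁ = s(u, v) := (Sym2.mem_and_mem_iff huv.ne).1 ⟨hu, hv⟩
    refine Or.inl ⟨e₁, he₁, hu, fun w hw => ?_⟩
    rcases Sym2.mem_iff.1 (he ▸ hw) with rfl | rfl <;> omega
  refine Or.inr ⟨e₂, he₂, hv, fun w hw => ?_⟩
  by_cases hwv : w = v
  · rw [hwv]
  -- `v`'s parent is `u`, which lies on the other edge `e₁`, so `v`'s partner in `e₂` is a child
  have hvw : A.Adj v w :=
    A.mem_edgeSet.1 ((Sym2.mem_and_mem_iff (Ne.symm hwv)).1 ⟨hv, hw⟩ ▸ hR.1 he₂)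
  have hwu : w ≠ u := by
    rintro rfl
    exact hR.2 e₁ he₁ e₂ he₂ h w ⟨hu, hw⟩
  rcases hA.dist_eq_dist_add_one_of_adj r hvw with hd' | hd'
  · exact absurd (hA.eq_of_adj_of_dist_eq_add_one r huv hvw.symm hd hd').symm hwu
  · omega

end Matching

section BColoring

variable {V : Type*} {A : SimpleGraph V} {B : Set V} {R : Set (Sym2 V)} {G : Set V}

lemma IsBColoring.isMatch (hBC : IsBColoring A B R G) : IsMatch A R :=
  ⟨hBC.1, hBC.2.2.2.2.2.1⟩

lemma IsBColoring.exists_child [Finite V] (hBC : IsBColoring A B R G) (hA : A.IsTree) (r : V)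
    {b : V} (hb : b ∈ B) : ∃ g ∈ G, A.Adj b g ∧ A.dist r g = A.dist r b + 1 := by
  obtain ⟨x, ⟨hbx, hx⟩, y, ⟨hby, hy⟩, hxy⟩ :=
    (Set.one_lt_ncard (Set.toFinite _)).1 (hBC.2.2.2.2.2.2.2 b hb)
  rcases hA.dist_eq_dist_add_one_of_adj r hbx with hdx | hdx
  · rcases hA.dist_eq_dist_add_one_of_adj r hby with hdy | hdy
    · exact absurd (hA.eq_of_adj_of_dist_eq_add_one r hbx.symm hby.symm hdx hdy) hxy
    · exact ⟨y, hy, hby, hdy⟩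
  · exact ⟨x, hx, hbx, hdx⟩

lemma IsBColoring.exists_isMatch_ncard_eq [Finite V] (hBC : IsBColoring A B R G)
    (hA : A.IsTree) (r : V) : ∃ M, IsMatch A M ∧ M.ncard = B.ncard + R.ncard := by
  choose! c hcG hadj hdist using fun b (hb : b ∈ B) => hBC.exists_child hA r hb
  have hR := hBC.isMatch
  obtain ⟨-, -, hBG, hBR, hGR, -⟩ := hBC
  have hBc : Disjoint B (c '' B) :=
    hBG.mono_right (Set.image_subset_iff.2 hcG)
  have hc : Set.InjOn c B := fun b hb b' hb' h =>
    hA.eq_of_adj_of_dist_eq_add_one r (hadj b hb) (h ▸ hadj b' hb') (hdist b hb)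
      (h ▸ hdist b' hb')
  have hsupp : Disjoint (Rsupp ((fun b => s(b, c b)) '' B)) (Rsupp R) :=
    (Disjoint.union_left hBR (hGR.mono_left (Set.image_subset_iff.2 hcG))).mono_left
      (Rsupp_image_mk_subset B c)
  have hinj : Set.InjOn (fun b => s(b, c b)) B := fun b hb b' hb' h => by
    replace h : s(b, c b) = s(b', c b') := h
    rcases Sym2.mem_iff.1 (h ▸ Sym2.mem_mk_left b (c b)) with h' | h'
    exacts [h', absurd ⟨b', hb', h'.symm⟩ (Set.disjoint_left.1 hBc hb)]
  refine ⟨_, (isMatch_image_mk hadj hc hBc).union hR hsupp, ?_⟩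
  rw [Set.ncard_union_eq (disjoint_of_disjoint_Rsupp hsupp), hinj.ncard_image]

lemma IsBColoring.isVC_union_parentEnds (hBC : IsBColoring A B R G) (hA : A.IsTree) (r : V) :
    IsVC A (B ∪ parentEnds A r R) := by
  have hR := hBC.isMatch
  obtain ⟨-, hcover, -, -, -, -, hGB, -⟩ := hBC
  intro e
  induction e using Sym2.ind with
  | _ u v =>
    intro he
    have huv : A.Adj u v := A.mem_edgeSet.1 he
    by_cases hu : u ∈ B
    · exact ⟨u, Or.inl hu, Sym2.mem_mk_left u v⟩
    by_cases hv : v ∈ B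
    · exact ⟨v, Or.inl hv, Sym2.mem_mk_right u v⟩
    have hsupp : ∀ {x y}, A.Adj x y → x ∉ B → y ∉ B → x ∈ Rsupp R := fun hxy hx hy => by
      rcases hcover ▸ Set.mem_univ _ with (h | h) | h
      exacts [absurd h hx, absurd (hGB _ _ hxy h) hy, h]
    obtain ⟨e₁, he₁, hue₁⟩ := hsupp huv hu hv
    obtain ⟨e₂, he₂, hve₂⟩ := hsupp huv.symm hv hu
    rcases hA.dist_eq_dist_add_one_of_adj r huv with hd | hd
    · rcases hR.mem_parentEnds_of_adj hA r huv.symm hd he₂ he₁ hve₂ hue₁ with h | h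
      exacts [⟨v, Or.inr h, Sym2.mem_mk_right u v⟩, ⟨u, Or.inr h, Sym2.mem_mk_left u v⟩]
    · rcases hR.mem_parentEnds_of_adj hA r huv hd he₁ he₂ hue₁ hve₂ with h | h
      exacts [⟨u, Or.inr h, Sym2.mem_mk_left u v⟩, ⟨v, Or.inr h, Sym2.mem_mk_right u v⟩]

end BColoring

theorem koenig_for_trees (A : SimpleGraph V) (hA : A.IsTree)
    (B : Set V) (R : Set (Sym2 V)) (G : Set V) (hBC : IsBColoring A B R G) :
    sInf {n : ℕ | ∃ C : Set V, IsVC A C ∧ C.ncard = n} = B.ncard + R.ncard ∧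
    sSup {n : ℕ | ∃ M : Set (Sym2 V), IsMatch A M ∧ M.ncard = n} = B.ncard + R.ncard := by
  obtain ⟨r⟩ := hA.connected.nonempty
  obtain ⟨M, hM, hMcard⟩ := hBC.exists_isMatch_ncard_eq hA r
  have hC := hBC.isVC_union_parentEnds hA r
  have hCM : (B ∪ parentEnds A r R).ncard ≤ M.ncard :=
    hMcard ▸ (Set.ncard_union_le _ _).trans
      (Nat.add_le_add_left (hA.ncard_parentEnds_le hBC.1) _)
  rw [← hMcard]
  exact ⟨hC.sInf_ncard_eq hM hCM, hM.sSup_ncard_eq hC hCM⟩
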